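/- Let a and b be nonzero vectors in the Euclidean plane ℝ² and let α be the angle between a and b (so 0 ≤ α ≤ π, with cos α = ⟨a,b⟩/(‖a‖·‖b‖)). For θ ∈ ℝ write u(θ) = (cos θ, sin θ). Then the Lebesgue measure of the set { θ ∈ [0, 2π) : ⟨u(θ), a⟩ > 0 and ⟨u(θ), b⟩ > 0 } equals π − α. -/

import Mathlib

open Real MeasureTheory Set InnerProductGeometry
open scoped RealInnerProductSpace

/-!
Write `a = ‖a‖ u(φ)` and `b = ‖b‖ u(ψ)`. Then `⟨u(θ), a⟩ = ‖a‖ cos (θ - φ)`, so the set in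
question is one period of the `2π`-periodic set of `θ` with `cos (θ - φ) > 0` and
`cos (θ - ψ) > 0`, and `ψ ≡ φ ± α (mod 2π)`. By periodicity the period may be taken to be
`(φ - π/2, φ + 3π/2]`; there, if `ψ ≡ φ + α` (otherwise swap `a` and `b`), the set is the
interval `(φ + α - π/2, φ + π/2)`, of length `π - α`.
-/

lemma Function.Periodic.volume_inter_Ioc_eq {S : Set ℝ} {T : ℝ} (hT : 0 < T)
    (hS : MeasurableSet S) (hper : Function.Periodic (· ∈ S) T) (c d : ℝ) :
    volume (S ∩ Ioc c (c + T)) = volume (S ∩ Ioc d (d + T)) := by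
  refine (isAddFundamentalDomain_Ioc hT c).measure_set_eq (isAddFundamentalDomain_Ioc hT d) hS ?_
  rintro ⟨g, hg⟩
  obtain ⟨k, rfl⟩ := AddSubgroup.mem_zmultiples_iff.mp hg
  ext x
  exact (add_comm x (k • T) ▸ hper.zsmul k x).to_iff

lemma Real.cos_pos_iff_of_mem_Ioc {x : ℝ} (hx : x ∈ Ioc (-(3 * π / 2)) (3 * π / 2)) :
    0 < cos x ↔ x ∈ Ioo (-(π / 2)) (π / 2) := by
  refine ⟨fun hcos => ⟨?_, ?_⟩, cos_pos_of_mem_Ioo⟩ <;> by_contra! h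
  · have := cos_nonpos_of_pi_div_two_le_of_le (x := -x) (by linarith) (by linarith [hx.1])
    rw [cos_neg] at this
    linarith
  · have := cos_nonpos_of_pi_div_two_le_of_le (x := x) h (by linarith [hx.2])
    linarith

def cosPosSet (φ ψ : ℝ) : Set ℝ :=
  {θ | 0 < cos (θ - φ) ∧ 0 < cos (θ - ψ)}

lemma cosPosSet_comm (φ ψ : ℝ) : cosPosSet φ ψ = cosPosSet ψ φ := by
  ext θ
  exact and_comm

lemma isOpen_cosPosSet (φ ψ : ℝ) : IsOpen (cosPosSet φ ψ) :=
  (isOpen_lt continuous_const (by fun_prop : Continuous fun θ => cos (θ - φ))).inter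
    (isOpen_lt continuous_const (by fun_prop : Continuous fun θ => cos (θ - ψ)))

lemma cosPosSet_periodic (φ ψ : ℝ) : Function.Periodic (· ∈ cosPosSet φ ψ) (2 * π) := by
  intro θ
  simp only [cosPosSet, mem_ofPred_eq, add_sub_right_comm, cos_add_two_pi]

lemma cosPosSet_inter_Ioc {φ α : ℝ} (hα0 : 0 ≤ α) (hαπ : α ≤ π) (k : ℤ) :
    cosPosSet φ (φ + α + k * (2 * π)) ∩ Ioc (φ - π / 2) (φ - π / 2 + 2 * π) =
      Ioo (φ + α - π / 2) (φ + π / 2) := by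
  ext θ
  have hsub : θ - (φ + α + k * (2 * π)) = θ - φ - α - k * (2 * π) := by ring
  simp only [cosPosSet, mem_inter_iff, mem_ofPred_eq, hsub, cos_sub_int_mul_two_pi]
  constructor
  · rintro ⟨⟨hφ, hψ⟩, hθ⟩
    have hφ' := (cos_pos_iff_of_mem_Ioc ⟨by linarith [hθ.1], by linarith [hθ.2]⟩).1 hφ
    have hψ' := (cos_pos_iff_of_mem_Ioc ⟨by linarith [hθ.1], by linarith [hθ.2]⟩).1 hψ
    exact ⟨by linarith [hψ'.1], by linarith [hφ'.2]⟩
  · rintro ⟨h₁, h₂⟩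
    exact ⟨⟨cos_pos_of_mem_Ioo ⟨by linarith, by linarith⟩,
      cos_pos_of_mem_Ioo ⟨by linarith, by linarith⟩⟩, by linarith, by linarith⟩

lemma volume_cosPosSet_add_inter_Ico {φ α : ℝ} (hα0 : 0 ≤ α) (hαπ : α ≤ π) (k : ℤ) :
    volume (cosPosSet φ (φ + α + k * (2 * π)) ∩ Ico 0 (2 * π)) = ENNReal.ofReal (π - α) := by
  set S := cosPosSet φ (φ + α + k * (2 * π))
  calc volume (S ∩ Ico 0 (2 * π))
      = volume (S ∩ Ioc 0 (0 + 2 * π)) := by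
        rw [zero_add]
        exact measure_congr (ae_eq_set_inter (Filter.EventuallyEq.refl _ _) Ico_ae_eq_Ioc)
    _ = volume (S ∩ Ioc (φ - π / 2) (φ - π / 2 + 2 * π)) :=
        (cosPosSet_periodic _ _).volume_inter_Ioc_eq two_pi_pos
          (isOpen_cosPosSet _ _).measurableSet _ _
    _ = ENNReal.ofReal (π - α) := by
        rw [cosPosSet_inter_Ioc hα0 hαπ, volume_Ioo]
        ring_nf

lemma volume_cosPosSet_inter_Ico {φ ψ α : ℝ} (hα0 : 0 ≤ α) (hαπ : α ≤ π)
    (hcos : cos α = cos (φ - ψ)) :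
    volume (cosPosSet φ ψ ∩ Ico 0 (2 * π)) = ENNReal.ofReal (π - α) := by
  obtain ⟨k, hk | hk⟩ := cos_eq_cos_iff.mp hcos
  · rw [cosPosSet_comm, show φ = ψ + α + k * (2 * π) by linarith]
    exact volume_cosPosSet_add_inter_Ico hα0 hαπ k
  · rw [show ψ = φ + α + (-k : ℤ) * (2 * π) by push_cast; linarith]
    exact volume_cosPosSet_add_inter_Ico hα0 hαπ (-k)

noncomputable def unitVec (θ : ℝ) : EuclideanSpace ℝ (Fin 2) :=
  (WithLp.equiv 2 (Fin 2 → ℝ)).symm ![cos θ, sin θ]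

lemma inner_unitVec_unitVec (θ φ : ℝ) : ⟪unitVec θ, unitVec φ⟫ = cos (θ - φ) := by
  simp only [unitVec, WithLp.equiv_symm_apply, PiLp.inner_apply, RCLike.inner_apply,
    ringHom_apply, Fin.sum_univ_two, Matrix.cons_val_zero, Matrix.cons_val_one, cos_sub]
  ring

lemma norm_unitVec (θ : ℝ) : ‖unitVec θ‖ = 1 := by
  rw [norm_eq_sqrt_real_inner, inner_unitVec_unitVec, sub_self, cos_zero, sqrt_one]

lemma cos_angle_unitVec (φ ψ : ℝ) : cos (angle (unitVec φ) (unitVec ψ)) = cos (φ - ψ) := by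
  rw [cos_angle, inner_unitVec_unitVec, norm_unitVec, norm_unitVec, mul_one, div_one]

lemma exists_eq_norm_smul_unitVec (a : EuclideanSpace ℝ (Fin 2)) :
    ∃ φ, a = ‖a‖ • unitVec φ := by
  set z : ℂ := ⟨a 0, a 1⟩
  have hz : ‖z‖ = ‖a‖ := by
    rw [Complex.norm_def, EuclideanSpace.norm_eq, Fin.sum_univ_two, Complex.normSq_mk]
    simp only [Real.norm_eq_abs, sq_abs]
    ring_nf
  refine ⟨z.arg, ?_⟩
  ext i
  fin_cases i
  · simp [unitVec, ← hz, Complex.norm_mul_cos_arg, z]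
  · simp [unitVec, ← hz, Complex.norm_mul_sin_arg, z]

lemma inner_unitVec_pos_iff {a : EuclideanSpace ℝ (Fin 2)} {φ : ℝ} (ha : a ≠ 0)
    (hφ : a = ‖a‖ • unitVec φ) (θ : ℝ) : 0 < ⟪unitVec θ, a⟫ ↔ 0 < cos (θ - φ) := by
  rw [hφ, inner_smul_right, inner_unitVec_unitVec, mul_pos_iff_of_pos_left (norm_pos_iff.2 ha)]

/-- Geometric core of Lemma 1: for nonzero vectors `a, b` in the Euclidean plane with
angle `α` between them, the Lebesgue measure of the set of directions
`θ ∈ [0, 2π)` whose unit vector `(cos θ, sin θ)` has positive inner product with both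
`a` and `b` equals `π - α`. -/
theorem stmt_4 (a b : EuclideanSpace ℝ (Fin 2)) (ha : a ≠ 0) (hb : b ≠ 0) :
    volume {θ : ℝ | θ ∈ Set.Ico (0 : ℝ) (2 * π) ∧
        0 < ⟪(WithLp.equiv 2 (Fin 2 → ℝ)).symm ![Real.cos θ, Real.sin θ], a⟫ ∧
        0 < ⟪(WithLp.equiv 2 (Fin 2 → ℝ)).symm ![Real.cos θ, Real.sin θ], b⟫} =
      ENNReal.ofReal (π - InnerProductGeometry.angle a b) := by
  obtain ⟨φ, hφ⟩ := exists_eq_norm_smul_unitVec a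
  obtain ⟨ψ, hψ⟩ := exists_eq_norm_smul_unitVec b
  have hset : {θ : ℝ | θ ∈ Ico 0 (2 * π) ∧ 0 < ⟪unitVec θ, a⟫ ∧ 0 < ⟪unitVec θ, b⟫} =
      cosPosSet φ ψ ∩ Ico 0 (2 * π) := by
    ext θ
    simp only [mem_ofPred_eq, mem_inter_iff, cosPosSet, inner_unitVec_pos_iff ha hφ,
      inner_unitVec_pos_iff hb hψ, and_comm]
  have hangle : angle a b = angle (unitVec φ) (unitVec ψ) := by
    rw [hφ, hψ, angle_smul_left_of_pos _ _ (norm_pos_iff.2 ha),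
      angle_smul_right_of_pos _ _ (norm_pos_iff.2 hb)]
  change volume {θ : ℝ | θ ∈ Ico 0 (2 * π) ∧ 0 < ⟪unitVec θ, a⟫ ∧ 0 < ⟪unitVec θ, b⟫} = _
  rw [hset]
  exact volume_cosPosSet_inter_Ico (angle_nonneg a b) (angle_le_pi a b)
    (hangle ▸ cos_angle_unitVec φ ψ)
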